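/- (Reproducing kernel property.) Assume S_μ ∩ ℝ = ∅ and let A♯ be a self-adjoint extension of A with eigenvalues {x_n} and orthogonal eigenprojections P_n. Equip Ĥ_μ := {φ̂ : φ ∈ H} with the inner product ⟨f, g⟩ := Σ_n ⟨P_n μ, μ⟩ · conj(f(x_n)) · g(x_n). Then Ĥ_μ is a Hilbert space with continuous point evaluations, and k(z, w) := ⟨ξ(z), ξ(w)⟩ is its reproducing kernel: for every f ∈ Ĥ_μ and every w ∈ ℂ ∖ S_μ, ⟨k(·, w), f⟩ = f(w). -/

import Mathlib

open scoped ComplexConjugate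
open Complex

noncomputable section

variable {H : Type*} [NormedAddCommGroup H] [InnerProductSpace ℂ H] [CompleteSpace H]

local notation "⟪" x ", " y "⟫" => @inner ℂ _ _ x y

/-- The range of `T - z·I`, as a subset of `H`. -/
def ranShift (T : H →ₗ.[ℂ] H) (z : ℂ) : Set H :=
  Set.range fun φ : T.domain => T φ - z • (φ : H)

/-- `ψ` belongs to the kernel of `T - z·I`. -/
def InKerShift (T : H →ₗ.[ℂ] H) (z : ℂ) (ψ : H) : Prop :=
  ∃ h : ψ ∈ T.domain, T ⟨ψ, h⟩ = z • ψ

/-- `H = ran(A - z·I) ∔ span{μ}` (direct algebraic sum): every vector has a unique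
decomposition `v = r + c • μ` with `r ∈ ran(A - z·I)`. -/
def GaugeSplit (A : H →ₗ.[ℂ] H) (μ : H) (z : ℂ) : Prop :=
  ∀ v : H, ∃! c : ℂ, v - c • μ ∈ ranShift A z

/-- The exceptional set `S_μ`. -/
def Smu (A : H →ₗ.[ℂ] H) (μ : H) : Set ℂ := {z | ¬ GaugeSplit A μ z}

/-- `A` is simple: `⋂_{Im z ≠ 0} ran(A - z·I) = {0}`. -/
def IsSimpleOp (A : H →ₗ.[ℂ] H) : Prop :=
  (⋂ z ∈ {w : ℂ | w.im ≠ 0}, ranShift A z) = ({0} : Set H)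

/-- `A` is regular: every `z ∈ ℂ` is a point of regular type, i.e. `A - z·I` has a
bounded inverse on its range. -/
def IsRegularOp (A : H →ₗ.[ℂ] H) : Prop :=
  ∀ z : ℂ, ∃ c : ℝ, 0 < c ∧ ∀ φ : A.domain, c * ‖(φ : H)‖ ≤ ‖A φ - z • (φ : H)‖

/-- `A` has deficiency indices `(1,1)`: for every `z ∈ ℂ`, the kernel of `A* - z·I`
is spanned by a single nonzero vector. -/
def DefIndicesOneOne (A : H →ₗ.[ℂ] H) : Prop :=
  ∀ z : ℂ, ∃ v : H, v ≠ 0 ∧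
    {ψ : H | InKerShift A.adjoint z ψ} = {w : H | ∃ c : ℂ, w = c • v}

/-- `A` is symmetric. -/
def IsSymmetricPOp (A : H →ₗ.[ℂ] H) : Prop :=
  ∀ x y : A.domain, ⟪(A x : H), (y : H)⟫ = ⟪(x : H), (A y : H)⟫

/-- The data of a densely defined, closed, symmetric, simple, regular operator with
deficiency indices (1,1): the setting of Krein's theory. -/
structure KreinOp (H : Type*) [NormedAddCommGroup H] [InnerProductSpace ℂ H]
    [CompleteSpace H] where
  A : H →ₗ.[ℂ] H
  dense : Dense (A.domain : Set H)
  closed : A.IsClosed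
  symm : IsSymmetricPOp A
  simple : IsSimpleOp A
  regular : IsRegularOp A
  defOneOne : DefIndicesOneOne A

/-- `B` is a self-adjoint extension of `A` (within `H`). -/
def IsSAExt (A B : H →ₗ.[ℂ] H) : Prop :=
  A ≤ B ∧ IsSelfAdjoint B

/-- `R z` is, for every `z ∈ res`, the (everywhere defined, bounded) inverse of `B - z·I`;
in particular `res ⊆ ℂ ∖ Sp(B)`. -/
def IsResolventOn (B : H →ₗ.[ℂ] H) (res : Set ℂ) (R : ℂ → H →L[ℂ] H) : Prop :=
  ∀ z ∈ res, (∀ v : H, ∃ h : R z v ∈ B.domain, B ⟨R z v, h⟩ - z • R z v = v)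
    ∧ ∀ φ : B.domain, R z ((B φ : H) - z • (φ : H)) = (φ : H)

/-- `ψ(z) = ψ₀ + (z - z₀)(B - z·I)⁻¹ ψ₀`. -/
def psiFun (R : ℂ → H →L[ℂ] H) (z₀ : ℂ) (ψ₀ : H) (z : ℂ) : H :=
  ψ₀ + (z - z₀) • R z ψ₀

/-- `ξ(z) = ψ(z̄) / ⟪μ, ψ(z̄)⟫`. -/
def xiFun (μ : H) (R : ℂ → H →L[ℂ] H) (z₀ : ℂ) (ψ₀ : H) (z : ℂ) : H :=
  (⟪μ, psiFun R z₀ ψ₀ (conj z)⟫)⁻¹ • psiFun R z₀ ψ₀ (conj z)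

/-- `P` is the orthogonal projection onto `Ker(B - x·I)`. -/
def IsEigenProjection (B : H →ₗ.[ℂ] H) (x : ℝ) (P : H →L[ℂ] H) : Prop :=
  IsSelfAdjoint P ∧ (∀ v : H, P (P v) = P v) ∧ ∀ v : H, (P v = v ↔ InKerShift B (x : ℂ) v)

/-! For each eigenvalue `x n` of `B`, the eigenspace of `B` lies in `Ker(A* - x n)`, which by
the deficiency indices is the line through `ψ(x n)`. Hence `P n` is either `0` or the rank-one
projection onto `ψ(x n)`, and because `x n ∉ S_μ` forces `⟪μ, ψ(x n)⟫ ≠ 0`, the `n`-th term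
`⟪P n μ, μ⟫ conj(φ̂(x n)) η̂(x n)` equals `⟪φ, P n η⟫` in either case. Summing over `n` with
`Σ P n = I` gives `⟪φ̂, η̂⟫ = ⟪φ, η⟫`; the reproducing property is the case `φ = ξ(w)`, and
continuity of point evaluation is Cauchy–Schwarz. -/

section

variable {𝕜 E : Type*} [RCLike 𝕜] [NormedAddCommGroup E] [InnerProductSpace 𝕜 E]

theorem IsStarProjection.eq_zero_or_eq_starProjection_span_singleton [CompleteSpace E]
    {p : E →L[𝕜] E} (hp : IsStarProjection p) {ψ : E} (hψ : ψ ≠ 0) (hrange : p.range ≤ 𝕜 ∙ ψ) :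
    p = 0 ∨ p = (𝕜 ∙ ψ).starProjection := by
  obtain ⟨_, hp_eq⟩ := isStarProjection_iff_eq_starProjection_range.mp hp
  rcases (nonzero_span_atom ψ hψ).le_iff.mp hrange with hbot | hspan
  · exact Or.inl (ContinuousLinearMap.coe_injective (LinearMap.range_eq_bot.mp hbot))
  · right
    rw [hp_eq]
    congr 1

theorem inner_starProjection_span_singleton_mul {ψ μ : E} (hμψ : inner 𝕜 μ ψ ≠ 0) (a b : E) :
    inner 𝕜 ((𝕜 ∙ ψ).starProjection μ) μ * conj (inner 𝕜 ((inner 𝕜 μ ψ)⁻¹ • ψ) a)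
        * inner 𝕜 ((inner 𝕜 μ ψ)⁻¹ • ψ) b
      = inner 𝕜 a ((𝕜 ∙ ψ).starProjection b) := by
  have hψ : ψ ≠ 0 := by rintro rfl; simp at hμψ
  have hψμ : inner 𝕜 ψ μ ≠ 0 := by rwa [← inner_conj_symm, map_ne_zero]
  have hnorm : ((‖ψ‖ ^ 2 : ℝ) : 𝕜) ≠ 0 := by simpa using hψ
  simp only [Submodule.starProjection_singleton, inner_smul_left, inner_smul_right, map_mul,
    map_inv₀, map_div₀, inner_conj_symm, RCLike.conj_ofReal]
  field_simp

theorem IsStarProjection.inner_apply_mul_eq_of_range_le_span_singleton [CompleteSpace E]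
    {p : E →L[𝕜] E} (hp : IsStarProjection p) {ψ μ : E} (hrange : p.range ≤ 𝕜 ∙ ψ)
    (hμψ : inner 𝕜 μ ψ ≠ 0) (a b : E) :
    inner 𝕜 (p μ) μ * conj (inner 𝕜 ((inner 𝕜 μ ψ)⁻¹ • ψ) a) * inner 𝕜 ((inner 𝕜 μ ψ)⁻¹ • ψ) b
      = inner 𝕜 a (p b) := by
  have hψ : ψ ≠ 0 := by rintro rfl; simp at hμψ
  rcases hp.eq_zero_or_eq_starProjection_span_singleton hψ hrange with rfl | rfl
  · simp
  · exact inner_starProjection_span_singleton_mul hμψ a b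

end

section

variable {E : Type*} [NormedAddCommGroup E] [InnerProductSpace ℂ E]

theorem InKerShift.of_le {C D : E →ₗ.[ℂ] E} (hCD : C ≤ D) {z : ℂ} {ψ : E}
    (hψ : InKerShift C z ψ) : InKerShift D z ψ := by
  obtain ⟨hmem, hval⟩ := hψ
  exact ⟨hCD.1 hmem, by rw [← hCD.2 (x := ⟨ψ, hmem⟩) rfl, hval]⟩

theorem inKerShift_psiFun {T C : E →ₗ.[ℂ] E} (hCT : C ≤ T) {res : Set ℂ} {R : ℂ → E →L[ℂ] E}
    (hR : IsResolventOn C res R) {z z₀ : ℂ} (hz : z ∈ res) {ψ₀ : E}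
    (hψ₀ : InKerShift T z₀ ψ₀) : InKerShift T z (psiFun R z₀ ψ₀ z) := by
  obtain ⟨hu, hCu⟩ := (hR z hz).1 ψ₀
  obtain ⟨hψ₀mem, hTψ₀⟩ := hψ₀
  have huT : R z ψ₀ ∈ T.domain := hCT.1 hu
  have hTu : T ⟨R z ψ₀, huT⟩ = z • R z ψ₀ + ψ₀ := by
    rw [← hCT.2 (x := ⟨R z ψ₀, hu⟩) rfl, sub_eq_iff_eq_add.mp hCu, add_comm]
  have hmem : psiFun R z₀ ψ₀ z ∈ T.domain := T.domain.add_mem hψ₀mem (T.domain.smul_mem _ huT)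
  refine ⟨hmem, ?_⟩
  have hsplit : (⟨psiFun R z₀ ψ₀ z, hmem⟩ : T.domain) = ⟨ψ₀, hψ₀mem⟩ + (z - z₀) • ⟨R z ψ₀, huT⟩ :=
    rfl
  rw [hsplit, T.map_add, T.map_smul, hTψ₀, hTu, psiFun]
  module

theorem psiFun_ne_zero {C : E →ₗ.[ℂ] E} {res : Set ℂ} {R : ℂ → E →L[ℂ] E}
    (hR : IsResolventOn C res R) {z z₀ : ℂ} (hz : z ∈ res) (hz₀ : z₀ ∈ res) {ψ₀ : E}
    (hψ₀ : ψ₀ ≠ 0) : psiFun R z₀ ψ₀ z ≠ 0 := by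
  intro hzero
  obtain ⟨hu, hCu⟩ := (hR z hz).1 ψ₀
  have hψ₀_eq : ψ₀ = -((z - z₀) • R z ψ₀) := eq_neg_of_add_eq_zero_left hzero
  have hker : C ⟨R z ψ₀, hu⟩ - z₀ • R z ψ₀ = 0 := by
    linear_combination (norm := module) hCu + hψ₀_eq
  have hRzero : R z ψ₀ = 0 := by
    simpa [hker] using ((hR z₀ hz₀).2 ⟨R z ψ₀, hu⟩).symm
  exact hψ₀ (by rw [hψ₀_eq, hRzero, smul_zero, neg_zero])

end

theorem IsSelfAdjoint.isFormalAdjoint_self {C : H →ₗ.[ℂ] H} (hC : IsSelfAdjoint C) :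
    C.IsFormalAdjoint C := by
  have h := LinearPMap.adjoint_isFormalAdjoint hC.dense_domain (T := C)
  rwa [LinearPMap.isSelfAdjoint_def.mp hC] at h

theorem IsSAExt.le_adjoint {A C : H →ₗ.[ℂ] H} (hA : Dense (A.domain : Set H))
    (hC : IsSAExt A C) : C ≤ A.adjoint :=
  LinearPMap.IsFormalAdjoint.le_adjoint hA fun u v => by
    rw [hC.1.2 (y := ⟨u, hC.1.1 u.2⟩) rfl]
    exact hC.2.isFormalAdjoint_self _ v

theorem inner_eq_zero_of_inKerShift_adjoint {A : H →ₗ.[ℂ] H} (hA : Dense (A.domain : Set H))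
    {z : ℂ} {ψ r : H} (hψ : InKerShift A.adjoint (conj z) ψ) (hr : r ∈ ranShift A z) :
    ⟪ψ, r⟫ = 0 := by
  obtain ⟨hmem, hval⟩ := hψ
  obtain ⟨φ, rfl⟩ := hr
  have hadj := LinearPMap.adjoint_isFormalAdjoint hA ⟨ψ, hmem⟩ φ
  rw [hval, inner_smul_left, Complex.conj_conj] at hadj
  rw [inner_sub_right, inner_smul_right, ← hadj, sub_self]

theorem GaugeSplit.inner_ne_zero {A : H →ₗ.[ℂ] H} (hA : Dense (A.domain : Set H)) {μ : H} {z : ℂ}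
    (hsplit : GaugeSplit A μ z) {ψ : H} (hψ : ψ ≠ 0) (hψk : InKerShift A.adjoint (conj z) ψ) :
    ⟪μ, ψ⟫ ≠ 0 := by
  obtain ⟨c, hc, -⟩ := hsplit ψ
  have horth : ⟪ψ, ψ⟫ = c * ⟪ψ, μ⟫ := by
    have h := inner_eq_zero_of_inKerShift_adjoint hA hψk hc
    rwa [inner_sub_right, inner_smul_right, sub_eq_zero] at h
  intro hμψ
  rw [← inner_conj_symm, map_eq_zero] at hμψ
  rw [hμψ, mul_zero, inner_self_eq_zero] at horth
  exact hψ horth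

theorem DefIndicesOneOne.mem_span_singleton {A : H →ₗ.[ℂ] H} (hA : DefIndicesOneOne A) {z : ℂ}
    {ψ u : H} (hψ : ψ ≠ 0) (hψk : InKerShift A.adjoint z ψ) (huk : InKerShift A.adjoint z u) :
    u ∈ ℂ ∙ ψ := by
  obtain ⟨v, -, hker⟩ := hA z
  obtain ⟨a, rfl⟩ : ∃ a : ℂ, ψ = a • v := (Set.ext_iff.mp hker ψ).mp hψk
  obtain ⟨c, rfl⟩ : ∃ c : ℂ, u = c • v := (Set.ext_iff.mp hker u).mp huk
  have ha : a ≠ 0 := by rintro rfl; simp at hψ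
  exact Submodule.mem_span_singleton.mpr ⟨c / a, by rw [smul_smul, div_mul_cancel₀ c ha]⟩

theorem IsEigenProjection.isStarProjection {C : H →ₗ.[ℂ] H} {x : ℝ} {P : H →L[ℂ] H}
    (hP : IsEigenProjection C x P) : IsStarProjection P :=
  ⟨ContinuousLinearMap.ext hP.2.1, hP.1⟩

theorem IsEigenProjection.range_le_span_singleton {A C : H →ₗ.[ℂ] H} {x : ℝ} {P : H →L[ℂ] H}
    (hP : IsEigenProjection C x P) (hCA : C ≤ A.adjoint) (hA : DefIndicesOneOne A) {ψ : H}
    (hψ : ψ ≠ 0) (hψk : InKerShift A.adjoint x ψ) : P.range ≤ ℂ ∙ ψ := by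
  rintro _ ⟨v, rfl⟩
  have hPv : InKerShift C x (P v) := (hP.2.2 (P v)).mp (hP.2.1 v)
  exact hA.mem_span_singleton hψ hψk (hPv.of_le hCA)

theorem statement11_general
    (S : KreinOp H)
    (B : H →ₗ.[ℂ] H) (hB : IsSAExt S.A B)
    (ι : Type)
    (x : ι → ℝ)
    (P : ι → H →L[ℂ] H) (hP : ∀ n, IsEigenProjection B (x n) (P n))
    (hsum : ∀ v : H, HasSum (fun n => P n v) v)
    (B' : H →ₗ.[ℂ] H) (hB' : IsSAExt S.A B')
    (res' : Set ℂ) (R' : ℂ → H →L[ℂ] H) (hR' : IsResolventOn B' res' R')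
    (z₀ : ℂ) (hz₀ : z₀ ∈ res')
    (ψ₀ : H) (hψ₀ne : ψ₀ ≠ 0) (hψ₀ : InKerShift S.A.adjoint z₀ ψ₀)
    (μ : H) (hSmuR : ∀ t : ℝ, (t : ℂ) ∉ Smu S.A μ)
    (hxres' : ∀ n, ((x n : ℝ) : ℂ) ∈ res') :
    (∀ φ η : H,
      HasSum
        (fun n =>
          ⟪P n μ, μ⟫ * conj (⟪xiFun μ R' z₀ ψ₀ ((x n : ℝ) : ℂ), φ⟫)
            * ⟪xiFun μ R' z₀ ψ₀ ((x n : ℝ) : ℂ), η⟫)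
        ⟪φ, η⟫)
    ∧ (∀ (φ : H) (w : ℂ), w ∉ Smu S.A μ → conj w ∈ res' →
        ‖⟪xiFun μ R' z₀ ψ₀ w, φ⟫‖ ≤ ‖xiFun μ R' z₀ ψ₀ w‖ * ‖φ‖)
    ∧ ∀ (φ : H) (w : ℂ), w ∉ Smu S.A μ → conj w ∈ res' →
        HasSum
          (fun n =>
            ⟪P n μ, μ⟫
              * conj (⟪xiFun μ R' z₀ ψ₀ ((x n : ℝ) : ℂ), xiFun μ R' z₀ ψ₀ w⟫)
              * ⟪xiFun μ R' z₀ ψ₀ ((x n : ℝ) : ℂ), φ⟫)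
          ⟪xiFun μ R' z₀ ψ₀ w, φ⟫ := by
  have hweight : ∀ n a b, ⟪P n μ, μ⟫ * conj ⟪xiFun μ R' z₀ ψ₀ (x n), a⟫
      * ⟪xiFun μ R' z₀ ψ₀ (x n), b⟫ = ⟪a, P n b⟫ := by
    intro n a b
    have hψk : InKerShift S.A.adjoint (x n) (psiFun R' z₀ ψ₀ (x n)) :=
      inKerShift_psiFun (hB'.le_adjoint S.dense) hR' (hxres' n) hψ₀
    have hψ : psiFun R' z₀ ψ₀ (x n) ≠ 0 := psiFun_ne_zero hR' (hxres' n) hz₀ hψ₀ne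
    have hgauge : ⟪μ, psiFun R' z₀ ψ₀ (x n)⟫ ≠ 0 :=
      (not_not.mp (hSmuR (x n))).inner_ne_zero S.dense hψ (by rwa [Complex.conj_ofReal])
    rw [xiFun, Complex.conj_ofReal]
    exact (hP n).isStarProjection.inner_apply_mul_eq_of_range_le_span_singleton
      ((hP n).range_le_span_singleton (hB.le_adjoint S.dense) S.defOneOne hψ hψk) hgauge a b
  have hparseval : ∀ φ η : H, HasSum (fun n => ⟪P n μ, μ⟫ * conj ⟪xiFun μ R' z₀ ψ₀ (x n), φ⟫
      * ⟪xiFun μ R' z₀ ψ₀ (x n), η⟫) ⟪φ, η⟫ := fun φ η => by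
    simpa only [hweight, innerSL_apply_apply] using (hsum η).mapL (innerSL ℂ φ)
  exact ⟨hparseval, fun φ w _ _ => norm_inner_le_norm _ _, fun φ w _ _ => hparseval _ φ⟩

/-- **Reproducing kernel property.** Assume `S_μ ∩ ℝ = ∅` and let `A♯` have
eigenvalues `{x n}` with orthogonal eigenprojections `{P n}`, `Σ_n P n = I` strongly. Equip
`Ĥ_μ = {φ̂ : φ ∈ H}` with `⟪f, g⟫ := Σ_n ⟪P_n μ, μ⟫ conj(f(x n)) g(x n)`. Then this inner
product reproduces the inner product of `H` (so `Ĥ_μ` is a Hilbert space), point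
evaluations are continuous, and `k(z,w) = ⟪ξ(z), ξ(w)⟫` is the reproducing kernel:
`⟪k(·,w), φ̂⟫ = φ̂(w)` for every `φ ∈ H` and `w ∈ ℂ ∖ S_μ`. -/
theorem statement11 [TopologicalSpace.SeparableSpace H]
    (S : KreinOp H)
    (B : H →ₗ.[ℂ] H) (hB : IsSAExt S.A B)
    (ι : Type) [Countable ι]
    (x : ι → ℝ) (hxinj : Function.Injective x)
    (P : ι → H →L[ℂ] H) (hP : ∀ n, IsEigenProjection B (x n) (P n))
    (hsum : ∀ v : H, HasSum (fun n => P n v) v)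
    (B' : H →ₗ.[ℂ] H) (hB' : IsSAExt S.A B')
    (res' : Set ℂ) (R' : ℂ → H →L[ℂ] H) (hR' : IsResolventOn B' res' R')
    (z₀ : ℂ) (hz₀ : z₀ ∈ res')
    (ψ₀ : H) (hψ₀ne : ψ₀ ≠ 0) (hψ₀ : InKerShift S.A.adjoint z₀ ψ₀)
    (μ : H) (hSmuR : ∀ t : ℝ, (t : ℂ) ∉ Smu S.A μ)
    (hxres' : ∀ n, ((x n : ℝ) : ℂ) ∈ res') :
    (∀ φ η : H,
      HasSum
        (fun n =>
          ⟪P n μ, μ⟫ * conj (⟪xiFun μ R' z₀ ψ₀ ((x n : ℝ) : ℂ), φ⟫)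
            * ⟪xiFun μ R' z₀ ψ₀ ((x n : ℝ) : ℂ), η⟫)
        ⟪φ, η⟫)
    ∧ (∀ (φ : H) (w : ℂ), w ∉ Smu S.A μ → conj w ∈ res' →
        ‖⟪xiFun μ R' z₀ ψ₀ w, φ⟫‖ ≤ ‖xiFun μ R' z₀ ψ₀ w‖ * ‖φ‖)
    ∧ ∀ (φ : H) (w : ℂ), w ∉ Smu S.A μ → conj w ∈ res' →
        HasSum
          (fun n =>
            ⟪P n μ, μ⟫
              * conj (⟪xiFun μ R' z₀ ψ₀ ((x n : ℝ) : ℂ), xiFun μ R' z₀ ψ₀ w⟫)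
              * ⟪xiFun μ R' z₀ ψ₀ ((x n : ℝ) : ℂ), φ⟫)
          ⟪xiFun μ R' z₀ ψ₀ w, φ⟫ :=
  statement11_general S B hB ι x P hP hsum B' hB' res' R' hR' z₀ hz₀ ψ₀ hψ₀ne hψ₀ μ hSmuR hxres'

end
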